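/- arXiv:2111.05625 — 2 statements merged into one kernel-verified Lean document; each statement's English description precedes it below -/
import Mathlib

section
/- Let Λ be a Bedford–McMullen carpet with non-uniform vertical fibres. Define β : ℝ → ℝ by β(ξ) = (1/log m)·( −ξ·log N + log ∑_{î=1}^M N_î^{γ^{−1} + (1−γ^{−1})·ξ} ) (equivalently, β(ξ) is the unique real with m^{−β(ξ)}·N^{−ξ}·∑_{î=1}^M N_î^{γ^{−1}+(1−γ^{−1})ξ} = 1), and let f(α) = inf_{ξ∈ℝ} ( α·ξ + β(ξ) ). Then for every t ∈ (min_î log N_î, max_î log N_î): I(t) = −(log m)·f( (log N)/(log m) − (1/log m − 1/log n)·t ) + t/γ + log M. -/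
open Filter Set MeasureTheory
open scoped ENNReal NNReal Topology

noncomputable section

/-- The data defining a Bedford–McMullen carpet: an `m × n` grid with `n > m ≥ 2` and a
nonempty set `A` of selected rectangles, with more than one nonempty column. -/
structure BMData where
  m : ℕ
  n : ℕ
  two_le_m : 2 ≤ m
  m_lt_n : m < n
  A : Finset (Fin m × Fin n)
  A_nonempty : A.Nonempty
  one_lt_cols : 1 < (A.image Prod.fst).card

namespace BMData

variable (C : BMData)

/-- The affine contraction `f_{(i,j)}` associated to a selected rectangle `(i, j) ∈ A`
(with the grid indexed from `0` rather than from `1`). -/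
def map (p : Fin C.m × Fin C.n) (x : ℝ × ℝ) : ℝ × ℝ :=
  (x.1 / C.m + (p.1 : ℝ) / C.m, x.2 / C.n + (p.2 : ℝ) / C.n)

/-- `Λ` is the attractor of the iterated function system: the unique nonempty compact set
satisfying `Λ = ⋃_{p ∈ A} f_p(Λ)`. -/
def IsAttractor (Λ : Set (ℝ × ℝ)) : Prop :=
  Λ.Nonempty ∧ IsCompact Λ ∧ Λ = ⋃ p ∈ C.A, C.map p '' Λ

/-- The (finite set of) nonempty columns. -/
def cols : Finset (Fin C.m) := C.A.image Prod.fst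

/-- `M`, the number of nonempty columns. -/
def M : ℕ := C.cols.card

/-- `N`, the total number of maps. -/
def N : ℕ := C.A.card

/-- The number `N_î` of maps in column `î`. -/
def colCount (i : Fin C.m) : ℕ := (C.A.filter fun p => p.1 = i).card

/-- Non-uniform vertical fibres: the column counts are not all equal. -/
def NonUniform : Prop :=
  ∃ i ∈ C.cols, ∃ j ∈ C.cols, C.colCount i ≠ C.colCount j

/-- `γ = log n / log m`. -/
def gamma : ℝ := Real.log C.n / Real.log C.m

/-- `t̲ = (1/M) ∑_ĵ log N_ĵ`. -/
def tLow : ℝ := (1 / (C.M : ℝ)) * ∑ j ∈ C.cols, Real.log (C.colCount j)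

/-- `t̄ = ∑_ĵ (N_ĵ/N) log N_ĵ`. -/
def tUp : ℝ := ∑ j ∈ C.cols, ((C.colCount j : ℝ) / (C.N : ℝ)) * Real.log (C.colCount j)

/-- The large deviations rate function
`I(t) = sup_λ (λt − log((1/M) ∑_ĵ N_ĵ^λ))`. -/
def rate (t : ℝ) : ℝ :=
  ⨆ l : ℝ, (l * t - Real.log ((1 / (C.M : ℝ)) * ∑ j ∈ C.cols, (C.colCount j : ℝ) ^ l))

/-- The map `T_s(t) = (s − log M/log m)·log n + γ·I(t)`. -/
def T (s t : ℝ) : ℝ :=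
  (s - Real.log C.M / Real.log C.m) * Real.log C.n + C.gamma * C.rate t

/-- The sequence `t_ℓ(s)`, shifted so that `t_L(s) = tseq s (L - 1)`:
`tseq s 0 = t_1(s) = (s − log M/log m)·log n` and `tseq s (k+1) = T_s (tseq s k)`. -/
def tseq (s : ℝ) : ℕ → ℝ
  | 0 => (s - Real.log C.M / Real.log C.m) * Real.log C.n
  | k + 1 => C.T s (tseq s k)

/-- The Hausdorff dimension of the carpet (Bedford–McMullen formula). -/
def dimH : ℝ :=
  (1 / Real.log C.m) *
    Real.log (∑ j ∈ C.cols, (C.colCount j : ℝ) ^ (Real.log C.m / Real.log C.n))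

/-- The box dimension of the carpet (Bedford–McMullen formula). -/
def dimB : ℝ :=
  Real.log C.N / Real.log C.n + (1 - Real.log C.m / Real.log C.n) * (Real.log C.M / Real.log C.m)

/-- `(M₀, Ñ_1 > ⋯ > Ñ_{M₀}, R_1, …, R_{M₀})` are the parameters of the carpet: `Ñ` lists the
distinct values among the column counts in strictly decreasing order, and `R î` is the number
of nonempty columns whose count equals `Ñ î`. -/
def HasParams (M0 : ℕ) (Nt R : Fin M0 → ℕ) : Prop :=
  (∀ i j : Fin M0, i < j → Nt j < Nt i) ∧
  (∀ i : Fin M0, 0 < R i) ∧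
  (∀ c ∈ C.cols, ∃ i : Fin M0, C.colCount c = Nt i) ∧
  (∀ i : Fin M0, R i = (C.cols.filter fun c => C.colCount c = Nt i).card)

/-- `ψ_{ī|k}(s) = M^{kγ}·n^{−sk}·∏_{ℓ=1}^k N_{i_ℓ}` for a word `ī` of length `J` over the
alphabet of nonempty columns. -/
def psi (s : ℝ) {J : ℕ} (w : Fin J → {c // c ∈ C.cols}) (k : ℕ) : ℝ :=
  (C.M : ℝ) ^ ((k : ℝ) * C.gamma) * (C.n : ℝ) ^ (-(s * (k : ℝ))) *
    ∏ l ∈ Finset.univ.filter (fun l : Fin J => (l : ℕ) < k), (C.colCount (w l).1 : ℝ)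

/-- `Ψ_J(s) = ∑_{ī} min_{0 ≤ k ≤ J} ψ_{ī|k}(s)`. -/
def Psi (J : ℕ) (s : ℝ) : ℝ :=
  ∑ w : Fin J → {c // c ∈ C.cols}, ⨅ k : Fin (J + 1), C.psi s w (k : ℕ)

open Classical in
/-- `∑_{ī : ψ_{ī|J}(s) ≤ 1} ψ_{ī|J}(s)`. -/
def psiSumLe (s : ℝ) (J : ℕ) : ℝ :=
  ∑ w : Fin J → {c // c ∈ C.cols}, if C.psi s w J ≤ 1 then C.psi s w J else 0

/-- `H(Q*_t)`: the maximal entropy of a probability vector `q` on the nonempty columns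
subject to `∑_ĵ q_ĵ log N_ĵ = t`. -/
def entMax (t : ℝ) : ℝ :=
  sSup { h : ℝ | ∃ q : Fin C.m → ℝ, (∀ j, 0 ≤ q j) ∧ (∀ j ∉ C.cols, q j = 0) ∧
    (∑ j ∈ C.cols, q j) = 1 ∧ (∑ j ∈ C.cols, q j * Real.log (C.colCount j)) = t ∧
    h = -∑ j ∈ C.cols, q j * Real.log (q j) }

/-- A probability vector on the nonempty columns. -/
def IsProbVec (p : Fin C.m → ℝ) : Prop :=
  (∀ j, 0 ≤ p j) ∧ (∀ j ∉ C.cols, p j = 0) ∧ (∑ j ∈ C.cols, p j) = 1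

/-- `∑_ĵ p_ĵ log N_ĵ`. -/
def colAvg (p : Fin C.m → ℝ) : ℝ := ∑ j ∈ C.cols, p j * Real.log (C.colCount j)

/-- The relative entropy `H(p‖P)` where `P = (N_1/N, …, N_M/N)`. -/
def relEntP (p : Fin C.m → ℝ) : ℝ :=
  ∑ j ∈ C.cols, p j * Real.log (p j / ((C.colCount j : ℝ) / (C.N : ℝ)))

/-- The relative entropy `H(p‖Q)` where `Q = (1/M, …, 1/M)`. -/
def relEntQ (p : Fin C.m → ℝ) : ℝ :=
  ∑ j ∈ C.cols, p j * Real.log (p j / (1 / (C.M : ℝ)))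

/-- The function `β(ξ)` of the multifractal spectrum of the uniform self-affine measure. -/
def beta (ξ : ℝ) : ℝ :=
  (1 / Real.log C.m) * (-(ξ * Real.log C.N) +
    Real.log (∑ j ∈ C.cols, (C.colCount j : ℝ) ^ (C.gamma⁻¹ + (1 - C.gamma⁻¹) * ξ)))

/-- `f(α) = inf_ξ (αξ + β(ξ))`. -/
def fspec (α : ℝ) : ℝ := ⨅ ξ : ℝ, (α * ξ + C.beta ξ)

end BMData

/-- The lower `θ`-intermediate dimension of a set in a metric space. -/
def lowerInterDim {X : Type*} [MetricSpace X] (θ : ℝ) (F : Set X) : ℝ :=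
  sInf { s : ℝ | 0 ≤ s ∧ ∀ ε > 0, ∀ δ₀ > 0, ∃ δ : ℝ, 0 < δ ∧ δ ≤ δ₀ ∧
    ∃ 𝒰 : Set (Set X), 𝒰.Countable ∧ F ⊆ ⋃₀ 𝒰 ∧
      (∀ U ∈ 𝒰, δ ^ (1 / θ) ≤ Metric.diam U ∧ Metric.diam U ≤ δ) ∧
      (∑' U : 𝒰, ENNReal.ofReal (Metric.diam (U : Set X) ^ s)) ≤ ENNReal.ofReal ε }

/-- The upper `θ`-intermediate dimension of a set in a metric space. -/
def upperInterDim {X : Type*} [MetricSpace X] (θ : ℝ) (F : Set X) : ℝ :=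
  sInf { s : ℝ | 0 ≤ s ∧ ∀ ε > 0, ∃ δ₀ > 0, ∀ δ : ℝ, 0 < δ → δ ≤ δ₀ →
    ∃ 𝒰 : Set (Set X), 𝒰.Countable ∧ F ⊆ ⋃₀ 𝒰 ∧
      (∀ U ∈ 𝒰, δ ^ (1 / θ) ≤ Metric.diam U ∧ Metric.diam U ≤ δ) ∧
      (∑' U : 𝒰, ENNReal.ofReal (Metric.diam (U : Set X) ^ s)) ≤ ENNReal.ofReal ε }

/-- The topological support of a Borel measure: the set of points all of whose
neighbourhoods have positive measure. -/
def measSupport {X : Type*} [MetricSpace X] [MeasurableSpace X] (μ : Measure X) : Set X :=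
  { x | ∀ r : ℝ, 0 < r → 0 < μ (Metric.ball x r) }

/-- `S^s_{δ,θ}(F)`: the infimal `s`-cost of a countable cover of `F` by sets of diameter
between `δ^{1/θ}` and `δ`. -/
def interCost {X : Type*} [MetricSpace X] (F : Set X) (θ s δ : ℝ) : ℝ≥0∞ :=
  sInf { c : ℝ≥0∞ | ∃ 𝒰 : Set (Set X), 𝒰.Countable ∧ F ⊆ ⋃₀ 𝒰 ∧
    (∀ U ∈ 𝒰, δ ^ (1 / θ) ≤ Metric.diam U ∧ Metric.diam U ≤ δ) ∧
    c = ∑' U : 𝒰, ENNReal.ofReal (Metric.diam (U : Set X) ^ s) }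

/-!
The identity is a change of variables in a Legendre transform. Substituting
`λ = γ⁻¹ + (1 - γ⁻¹) ξ`, an affine bijection of `ℝ` because `γ > 1`, turns
`-(log m) (α ξ + β(ξ))` into `λ t - log ((1/M) ∑ N_ĵ^λ) - t/γ - log M`,
so `-(log m) f(α)` becomes `I(t) - t/γ - log M`. The only analytic input is that
the supremum defining `I(t)` is finite, which holds because `t` lies between the
smallest and the largest `log N_ĵ`.
-/

open Real

theorem mul_log_le_log_sum_rpow {ι : Type*} {s : Finset ι} {a : ι → ℝ}
    (ha : ∀ i ∈ s, 0 < a i) {j : ι} (hj : j ∈ s) (l : ℝ) :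
    l * log (a j) ≤ log (∑ i ∈ s, a i ^ l) := by
  rw [← log_rpow (ha j hj)]
  exact log_le_log (rpow_pos_of_pos (ha j hj) l)
    (Finset.single_le_sum (fun i hi => (rpow_pos_of_pos (ha i hi) l).le) hj)

theorem mul_le_log_sum_rpow {ι : Type*} {s : Finset ι} {a : ι → ℝ}
    (ha : ∀ i ∈ s, 0 < a i) {i j : ι} (hi : i ∈ s) (hj : j ∈ s) {t : ℝ}
    (hit : log (a i) ≤ t) (htj : t ≤ log (a j)) (l : ℝ) :
    l * t ≤ log (∑ k ∈ s, a k ^ l) := by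
  rcases le_or_gt 0 l with hl | hl
  · exact (mul_le_mul_of_nonneg_left htj hl).trans (mul_log_le_log_sum_rpow ha hj l)
  · exact (mul_le_mul_of_nonpos_left hit hl.le).trans (mul_log_le_log_sum_rpow ha hi l)

namespace BMData

variable (C : BMData)

/-- The cumulant generating function of `log N_ĵ` for `ĵ` uniform on the nonempty columns. -/
def logMGF (l : ℝ) : ℝ :=
  log ((1 / (C.M : ℝ)) * ∑ j ∈ C.cols, (C.colCount j : ℝ) ^ l)

theorem rate_eq_iSup (t : ℝ) : C.rate t = ⨆ l : ℝ, (l * t - C.logMGF l) := rfl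

theorem colCount_pos {j : Fin C.m} (hj : j ∈ C.cols) : (0 : ℝ) < C.colCount j := by
  obtain ⟨p, hp, hpj⟩ := Finset.mem_image.mp hj
  exact_mod_cast Finset.card_pos.mpr ⟨p, Finset.mem_filter.mpr ⟨hp, hpj⟩⟩

theorem cols_nonempty : C.cols.Nonempty :=
  Finset.card_pos.mp (Nat.zero_lt_one.trans C.one_lt_cols)

theorem logMGF_eq (l : ℝ) :
    C.logMGF l = log (∑ j ∈ C.cols, (C.colCount j : ℝ) ^ l) - log C.M := by
  have hM : (C.M : ℝ) ≠ 0 := by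
    exact_mod_cast (Nat.zero_lt_one.trans C.one_lt_cols).ne'
  have hsum : ∑ j ∈ C.cols, (C.colCount j : ℝ) ^ l ≠ 0 :=
    (Finset.sum_pos (fun j hj => rpow_pos_of_pos (C.colCount_pos hj) l) C.cols_nonempty).ne'
  rw [logMGF, one_div, log_mul (inv_ne_zero hM) hsum, log_inv]
  ring

theorem bddAbove_range_mul_sub_logMGF {i j : Fin C.m} (hi : i ∈ C.cols) (hj : j ∈ C.cols)
    {t : ℝ} (hit : log (C.colCount i) ≤ t) (htj : t ≤ log (C.colCount j)) :
    BddAbove (Set.range fun l : ℝ => l * t - C.logMGF l) := by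
  refine ⟨log C.M, ?_⟩
  rintro _ ⟨l, rfl⟩
  have := mul_le_log_sum_rpow (fun k hk => C.colCount_pos hk) hi hj hit htj l
  simp only [logMGF_eq]
  linarith

theorem log_m_pos : 0 < log C.m :=
  log_pos (by exact_mod_cast (one_lt_two.trans_le C.two_le_m))

theorem log_m_lt_log_n : log C.m < log C.n :=
  log_lt_log (by exact_mod_cast (two_pos.trans_le C.two_le_m)) (by exact_mod_cast C.m_lt_n)

theorem gamma_inv_lt_one : C.gamma⁻¹ < 1 := by
  rw [gamma, inv_div]
  exact (div_lt_one (C.log_m_pos.trans C.log_m_lt_log_n)).2 C.log_m_lt_log_n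

theorem neg_log_m_mul_spectrum_objective (t ξ : ℝ) :
    -log C.m * ((log C.N / log C.m - (1 / log C.m - 1 / log C.n) * t) * ξ + C.beta ξ) =
      (C.gamma⁻¹ + (1 - C.gamma⁻¹) * ξ) * t
        - C.logMGF (C.gamma⁻¹ + (1 - C.gamma⁻¹) * ξ) - (t / C.gamma + log C.M) := by
  have hm := C.log_m_pos.ne'
  have hn := (C.log_m_pos.trans C.log_m_lt_log_n).ne'
  rw [logMGF_eq, beta, gamma, inv_div]
  field_simp
  ring

end BMData

theorem statement11_general (C : BMData) (t : ℝ)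
    (ht1 : (⨅ j : {c // c ∈ C.cols}, Real.log (C.colCount j.1)) < t)
    (ht2 : t < ⨆ j : {c // c ∈ C.cols}, Real.log (C.colCount j.1)) :
    C.rate t =
      -(Real.log C.m) * C.fspec (Real.log C.N / Real.log C.m
          - (1 / Real.log C.m - 1 / Real.log C.n) * t)
        + t / C.gamma + Real.log C.M := by
  have : Nonempty {c // c ∈ C.cols} := C.cols_nonempty.to_subtype
  obtain ⟨⟨i, hi⟩, hmin⟩ := exists_eq_ciInf_of_finite
    (f := fun j : {c // c ∈ C.cols} => log (C.colCount j.1))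
  obtain ⟨⟨j, hj⟩, hmax⟩ := exists_eq_ciSup_of_finite
    (f := fun j : {c // c ∈ C.cols} => log (C.colCount j.1))
  have hbdd := C.bddAbove_range_mul_sub_logMGF hi hj (hmin ▸ ht1.le) (hmax ▸ ht2.le)
  have hreparam : Function.Surjective fun ξ : ℝ => C.gamma⁻¹ + (1 - C.gamma⁻¹) * ξ :=
    fun l => ⟨(l - C.gamma⁻¹) / (1 - C.gamma⁻¹), by
      field_simp [(sub_pos.2 C.gamma_inv_lt_one).ne']; ring⟩
  have hspec : -log C.m * C.fspec (log C.N / log C.m - (1 / log C.m - 1 / log C.n) * t) =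
      (⨆ l : ℝ, (l * t - C.logMGF l)) - (t / C.gamma + log C.M) := by
    rw [BMData.fspec, Real.mul_iInf_of_nonpos (neg_nonpos.2 C.log_m_pos.le)]
    exact (hreparam.iSup_congr _ fun ξ => (C.neg_log_m_mul_spectrum_objective t ξ).symm).trans
      ((OrderIso.subRight _).map_ciSup hbdd).symm
  rw [BMData.rate_eq_iSup, hspec]
  ring

/-- **Proposition (rate function and multifractal spectrum).** With
`β(ξ) = (1/log m)(−ξ log N + log ∑_î N_î^{γ⁻¹+(1−γ⁻¹)ξ})` and `f(α) = inf_ξ (αξ + β(ξ))`,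
for every `t ∈ (min_î log N_î, max_î log N_î)`:
`I(t) = −(log m)·f(log N/log m − (1/log m − 1/log n)·t) + t/γ + log M`. -/
theorem statement11 (C : BMData) (hnu : C.NonUniform) (t : ℝ)
    (ht1 : (⨅ j : {c // c ∈ C.cols}, Real.log (C.colCount j.1)) < t)
    (ht2 : t < ⨆ j : {c // c ∈ C.cols}, Real.log (C.colCount j.1)) :
    C.rate t =
      -(Real.log C.m) * C.fspec (Real.log C.N / Real.log C.m
          - (1 / Real.log C.m - 1 / Real.log C.n) * t)
        + t / C.gamma + Real.log C.M :=
  statement11_general C t ht1 ht2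
end
end

section
/- Let Λ be a Bedford–McMullen carpet with non-uniform vertical fibres, and let φ : {1,…,N} → {1,…,M} be any map with #φ^{−1}(ĵ) = N_ĵ for each ĵ. For a word ī = (i_1,…,i_J) ∈ {1,…,N}^J write A(ī) = (1/J)·∑_{j=1}^J log N_{φ(i_j)}. (a) For every t ∈ [t̲, max_ĵ log N_ĵ): lim_{J→∞} (1/J)·log #{ ī ∈ {1,…,N}^J : A(ī) ≤ t } = min{t, t̄} + log M − I(min{t, t̄}). (b) For every t ∈ (min_ĵ log N_ĵ, t̲): limsup_{J→∞} (1/J)·log #{ ī ∈ {1,…,N}^J : A(ī) ≤ t } ≤ t + log M < t̲ + log M. -/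
/-!
Put `ℓ(a) = log N_{φ(a)}` on the maps, so that the words counted are those with
`S(ī) = ∑ ℓ(i_j) ≤ J t`. With `P(μ) = ∑_a e^{μ ℓ(a)}`, whose logarithmic derivative is the tilted
mean `m(μ)`, Chernoff's bound gives `#{S ≤ J t} ≤ e^{-μ J t} P(μ)^J` for `μ ≤ 0`. Tilting the
uniform measure on words by `e^{μ S}` shows this is sharp when `m(μ) = t`: the tilted measure
concentrates on `S / J ≈ m(μ)`, where each word has tilted weight at most about `e^{μ J t}`.
Since `P(λ - 1) = ∑_ĵ N_ĵ^λ`, the rate function is `I(m(μ)) = (μ + 1) m(μ) - log P(μ) + log M`,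
so the exponent `-μ m(μ) + log P(μ)` is `t + log M - I(t)` at `t = m(μ)`. As `m` increases
from `m(-1) = t̲` to `m(0) = t̄`, part (a) takes `m(μ) = t` for `t ≤ t̄` and `μ = 0` for `t > t̄`;
part (b) is the Chernoff bound at `μ = -1`, where `P(-1) = M`.
-/

open Filter Set MeasureTheory
open scoped ENNReal NNReal Topology

noncomputable section

section Calculus

variable {f : ℝ → ℝ} {f' x : ℝ}

lemma HasDerivAt.exists_pos_add_lt (hf : HasDerivAt f f' x) {β : ℝ} (h : f' < β) :
    ∃ θ > 0, f (x + θ) < f x + θ * β := by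
  obtain ⟨θ, hslope, hθ⟩ :=
    ((hf.tendsto_slope_zero_right.eventually_lt_const h).and self_mem_nhdsWithin).exists
  refine ⟨θ, hθ, ?_⟩
  rw [smul_eq_mul, inv_mul_lt_iff₀ hθ] at hslope
  linarith

lemma HasDerivAt.exists_pos_sub_lt (hf : HasDerivAt f f' x) {α : ℝ} (h : α < f') :
    ∃ θ > 0, f (x - θ) < f x - θ * α := by
  obtain ⟨θ, hslope, hθ⟩ :=
    ((hf.tendsto_slope_zero_left.eventually_const_lt h).and self_mem_nhdsWithin).exists
  refine ⟨-θ, neg_pos.2 hθ, ?_⟩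
  rw [smul_eq_mul, inv_mul_eq_div, lt_div_iff_of_neg hθ] at hslope
  rw [sub_neg_eq_add]
  linarith

lemma ContinuousAt.exists_lt_lt (hf : ContinuousAt f x) {c : ℝ} (hc : c < f x) :
    ∃ y < x, c < f y := by
  obtain ⟨y, hcy, hyx⟩ :=
    (((hf.mono_left nhdsWithin_le_nhds).eventually_const_lt hc).and
      (self_mem_nhdsWithin : Set.Iio x ∈ 𝓝[<] x)).exists
  exact ⟨y, hyx, hcy⟩

lemma Real.exp_mul_lt_of_add_log_lt {u y z : ℝ} (hy : 0 < y) (hz : 0 < z)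
    (h : u + Real.log y < Real.log z) : Real.exp u * y < z := by
  rw [← Real.exp_log hy, ← Real.exp_log hz, ← Real.exp_add]
  exact Real.exp_lt_exp.2 h

end Calculus

namespace Cramer

open Real Finset

variable {α : Type*} [Fintype α] (ℓ : α → ℝ)

def expSum (μ : ℝ) : ℝ := ∑ a, exp (μ * ℓ a)

def tiltedWeight (μ : ℝ) (a : α) : ℝ := exp (μ * ℓ a) / expSum ℓ μ

def tiltedMean (μ : ℝ) : ℝ := (∑ a, ℓ a * exp (μ * ℓ a)) / expSum ℓ μ

def wordSum {J : ℕ} (w : Fin J → α) : ℝ := ∑ j, ℓ (w j)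

def wordCount (J : ℕ) (t : ℝ) : ℕ :=
  Nat.card {w : Fin J → α // (1 / (J : ℝ)) * wordSum ℓ w ≤ t}

variable {ℓ}

lemma expSum_pos [Nonempty α] (μ : ℝ) : 0 < expSum ℓ μ :=
  sum_pos (fun _ _ => exp_pos _) univ_nonempty

lemma continuous_expSum : Continuous (expSum ℓ) := by
  unfold expSum
  fun_prop

lemma continuous_tiltedMean [Nonempty α] : Continuous (tiltedMean ℓ) :=
  Continuous.div (by fun_prop) continuous_expSum fun μ => (expSum_pos μ).ne'

lemma hasDerivAt_log_expSum [Nonempty α] (μ : ℝ) :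
    HasDerivAt (fun ν => log (expSum ℓ ν)) (tiltedMean ℓ μ) μ := by
  have h : HasDerivAt (expSum ℓ) (∑ a, ℓ a * exp (μ * ℓ a)) μ := by
    refine HasDerivAt.fun_sum fun a _ => ?_
    simpa [mul_comm] using ((hasDerivAt_id μ).mul_const (ℓ a)).exp
  exact h.log (expSum_pos μ).ne'

lemma tiltedWeight_pos [Nonempty α] (μ : ℝ) (a : α) : 0 < tiltedWeight ℓ μ a :=
  div_pos (exp_pos _) (expSum_pos μ)

lemma sum_tiltedWeight [Nonempty α] (μ : ℝ) : ∑ a, tiltedWeight ℓ μ a = 1 := by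
  simp only [tiltedWeight, ← sum_div]
  exact div_self (expSum_pos μ).ne'

lemma sum_tiltedWeight_smul (μ κ : ℝ) :
    ∑ a, tiltedWeight ℓ μ a • (κ * ℓ a) = κ * tiltedMean ℓ μ := by
  rw [tiltedMean, mul_div_assoc', mul_sum, sum_div]
  exact sum_congr rfl fun a _ => by rw [tiltedWeight, smul_eq_mul]; ring

lemma sum_tiltedWeight_smul_exp (μ ν : ℝ) :
    ∑ a, tiltedWeight ℓ μ a • exp ((ν - μ) * ℓ a) = expSum ℓ ν / expSum ℓ μ := by
  rw [show expSum ℓ ν = ∑ a, exp (ν * ℓ a) from rfl, sum_div]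
  refine sum_congr rfl fun a _ => ?_
  rw [tiltedWeight, smul_eq_mul, div_mul_eq_mul_div, ← exp_add]
  ring_nf

lemma log_expSum_add_le [Nonempty α] (μ ν : ℝ) :
    log (expSum ℓ μ) + (ν - μ) * tiltedMean ℓ μ ≤ log (expSum ℓ ν) := by
  have := convexOn_exp.map_sum_le (t := univ) (p := fun a => (ν - μ) * ℓ a)
    (fun a _ => (tiltedWeight_pos (ℓ := ℓ) μ a).le) (sum_tiltedWeight μ) fun a _ => mem_univ _
  rw [sum_tiltedWeight_smul, sum_tiltedWeight_smul_exp,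
    ← log_le_log_iff (exp_pos _) (div_pos (expSum_pos ν) (expSum_pos μ)), log_exp,
    log_div (expSum_pos ν).ne' (expSum_pos μ).ne'] at this
  linarith

lemma log_expSum_add_lt (hℓ : ∃ a b, ℓ a ≠ ℓ b) {μ ν : ℝ} (hμν : μ ≠ ν) :
    log (expSum ℓ μ) + (ν - μ) * tiltedMean ℓ μ < log (expSum ℓ ν) := by
  obtain ⟨a, b, hab⟩ := hℓ
  have : Nonempty α := ⟨a⟩
  have hpts : ∃ j ∈ (univ : Finset α), ∃ k ∈ (univ : Finset α), (ν - μ) * ℓ j ≠ (ν - μ) * ℓ k :=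
    ⟨a, mem_univ _, b, mem_univ _, fun h => hab (mul_left_cancel₀ (sub_ne_zero.2 hμν.symm) h)⟩
  have := strictConvexOn_exp.map_sum_lt (fun a _ => tiltedWeight_pos (ℓ := ℓ) μ a)
    (sum_tiltedWeight μ) (fun a _ => Set.mem_univ _) hpts
  rw [sum_tiltedWeight_smul, sum_tiltedWeight_smul_exp,
    ← log_lt_log_iff (exp_pos _) (div_pos (expSum_pos ν) (expSum_pos μ)), log_exp,
    log_div (expSum_pos ν).ne' (expSum_pos μ).ne'] at this
  linarith

lemma strictMono_tiltedMean (hℓ : ∃ a b, ℓ a ≠ ℓ b) : StrictMono (tiltedMean ℓ) := by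
  have : Nonempty α := ⟨hℓ.choose⟩
  intro μ ν hμν
  have h₁ := log_expSum_add_lt hℓ hμν.ne
  have h₂ := log_expSum_add_le (ℓ := ℓ) ν μ
  nlinarith

lemma exists_le_tiltedMean [Nonempty α] (μ : ℝ) : ∃ a, ℓ a ≤ tiltedMean ℓ μ := by
  by_contra! h
  have : tiltedMean ℓ μ * expSum ℓ μ < ∑ a, ℓ a * exp (μ * ℓ a) := by
    rw [expSum, mul_sum]
    exact sum_lt_sum_of_nonempty univ_nonempty fun a _ =>
      mul_lt_mul_of_pos_right (h a) (exp_pos _)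
  rw [tiltedMean, div_mul_cancel₀ _ (expSum_pos μ).ne'] at this
  exact lt_irrefl _ this

lemma exists_exp_mul_expSum_sub_lt [Nonempty α] {μ a : ℝ} (ha : a < tiltedMean ℓ μ) :
    ∃ η > 0, exp (η * a) * expSum ℓ (μ - η) < expSum ℓ μ := by
  obtain ⟨η, hη, h⟩ := (hasDerivAt_log_expSum (ℓ := ℓ) μ).exists_pos_sub_lt ha
  exact ⟨η, hη, exp_mul_lt_of_add_log_lt (expSum_pos _) (expSum_pos _) (by linarith)⟩

lemma exists_exp_mul_expSum_add_lt [Nonempty α] {μ t : ℝ} (ht : tiltedMean ℓ μ < t) :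
    ∃ η > 0, exp (-η * t) * expSum ℓ (μ + η) < expSum ℓ μ := by
  obtain ⟨η, hη, h⟩ := (hasDerivAt_log_expSum (ℓ := ℓ) μ).exists_pos_add_lt ht
  exact ⟨η, hη, exp_mul_lt_of_add_log_lt (expSum_pos _) (expSum_pos _) (by linarith)⟩

lemma sum_exp_wordSum (μ : ℝ) (J : ℕ) :
    ∑ w : Fin J → α, exp (μ * wordSum ℓ w) = expSum ℓ μ ^ J := by
  rw [expSum, Fintype.sum_pow]
  exact sum_congr rfl fun w _ => by rw [wordSum, mul_sum, exp_sum]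

lemma sum_ite_exp_wordSum_le {J : ℕ} (p : ℝ → Prop) [DecidablePred p] {μ η b : ℝ}
    (hp : ∀ s, p s → η * s ≤ η * b) :
    ∑ w : Fin J → α, (if p (wordSum ℓ w) then exp (μ * wordSum ℓ w) else 0)
      ≤ exp (η * b) * expSum ℓ (μ - η) ^ J := by
  rw [← sum_exp_wordSum, mul_sum]
  refine sum_le_sum fun w _ => ?_
  split_ifs with h
  · rw [← exp_add]
    exact exp_le_exp.2 (by nlinarith [hp _ h])
  · positivity

lemma wordCount_eq_sum {J : ℕ} (hJ : 0 < J) (t : ℝ) :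
    (wordCount ℓ J t : ℝ) = ∑ w : Fin J → α, if wordSum ℓ w ≤ J * t then 1 else 0 := by
  rw [sum_boole, wordCount, Nat.card_eq_fintype_card, Fintype.card_subtype]
  simp only [one_div, inv_mul_le_iff₀ (Nat.cast_pos.2 hJ : (0 : ℝ) < J)]

lemma one_le_wordCount {J : ℕ} (hJ : 0 < J) {t : ℝ} {a : α} (ha : ℓ a ≤ t) :
    1 ≤ wordCount ℓ J t := by
  refine Nat.one_le_iff_ne_zero.2 (Nat.card_pos_iff.2 ⟨⟨⟨fun _ => a, ?_⟩⟩, inferInstance⟩).ne'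
  simpa [wordSum, (Nat.cast_pos.2 hJ).ne'] using ha

lemma wordCount_le {μ : ℝ} (hμ : μ ≤ 0) {J : ℕ} (hJ : 0 < J) (t : ℝ) :
    (wordCount ℓ J t : ℝ) ≤ exp (-μ * (J * t)) * expSum ℓ μ ^ J := by
  have := sum_ite_exp_wordSum_le (ℓ := ℓ) (J := J) (· ≤ J * t) (μ := 0) (η := -μ)
    fun s hs => mul_le_mul_of_nonneg_left hs (by linarith)
  simpa [wordCount_eq_sum hJ] using this

lemma log_wordCount_le {μ : ℝ} (hμ : μ ≤ 0) {J : ℕ} (hJ : 0 < J) {t : ℝ} (ht : ∃ a, ℓ a ≤ t) :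
    1 / (J : ℝ) * log (wordCount ℓ J t) ≤ -μ * t + log (expSum ℓ μ) := by
  obtain ⟨a, ha⟩ := ht
  have : Nonempty α := ⟨a⟩
  have hcount : (0 : ℝ) < wordCount ℓ J t := by exact_mod_cast one_le_wordCount hJ ha
  have := log_le_log hcount (wordCount_le hμ hJ t)
  rw [log_mul (exp_pos _).ne' (pow_pos (expSum_pos μ) J).ne', log_exp, log_pow] at this
  rw [one_div, inv_mul_le_iff₀ (Nat.cast_pos.2 hJ)]
  linarith

lemma exp_sub_ite_sub_ite_le {μ A B s : ℝ} (hμ : μ ≤ 0) :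
    exp (μ * s) - (if s ≤ A then exp (μ * s) else 0) - (if B ≤ s then exp (μ * s) else 0)
      ≤ exp (μ * A) * if s ≤ B then 1 else 0 := by
  have := exp_pos (μ * s)
  have := exp_pos (μ * A)
  split_ifs <;> first
    | linarith
    | nlinarith [exp_le_exp.2 (show μ * s ≤ μ * A by nlinarith)]

/-- After removing Chernoff bounds for the two tails `S ≤ A` and `S ≥ J t`, the total tilted
weight `expSum ℓ μ ^ J` is carried by words with `A < S < J t`, each of weight at most
`exp (μ A)`. -/
lemma wordCount_ge {μ : ℝ} (hμ : μ ≤ 0) {J : ℕ} (hJ : 0 < J) (A t : ℝ) {η η' : ℝ}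
    (hη : 0 ≤ η) (hη' : 0 ≤ η') :
    expSum ℓ μ ^ J - exp (η' * A) * expSum ℓ (μ - η') ^ J
        - exp (-η * (J * t)) * expSum ℓ (μ + η) ^ J
      ≤ exp (μ * A) * wordCount ℓ J t := by
  have hlow := sum_ite_exp_wordSum_le (ℓ := ℓ) (J := J) (· ≤ A) (μ := μ) (η := η')
    fun s hs => mul_le_mul_of_nonneg_left hs hη'
  have hhigh := sum_ite_exp_wordSum_le (ℓ := ℓ) (J := J) (J * t ≤ ·) (μ := μ) (η := -η)
    fun s hs => mul_le_mul_of_nonpos_left hs (by linarith)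
  rw [sub_neg_eq_add] at hhigh
  have hpoint := sum_le_sum fun (w : Fin J → α) (_ : w ∈ Finset.univ) =>
    exp_sub_ite_sub_ite_le (A := A) (B := J * t) (s := wordSum ℓ w) hμ
  rw [sum_sub_distrib, sum_sub_distrib, sum_exp_wordSum, ← mul_sum,
    ← wordCount_eq_sum hJ] at hpoint
  linarith

/-- When `a < tiltedMean ℓ μ < t`, both tails in `wordCount_ge` (at `A = J a`) are
exponentially smaller than `expSum ℓ μ ^ J`, by the slopes of `log ∘ expSum` at `μ`. -/
lemma eventually_exp_pow_lt_wordCount [Nonempty α] {μ a t c : ℝ} (hμ : μ ≤ 0)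
    (ha : a < tiltedMean ℓ μ) (ht : tiltedMean ℓ μ < t) (hc : c < -μ * a + log (expSum ℓ μ)) :
    ∀ᶠ J : ℕ in atTop, exp c ^ J < wordCount ℓ J t := by
  set P := expSum ℓ μ
  have hP : 0 < P := expSum_pos μ
  obtain ⟨η', hη', hlow⟩ := exists_exp_mul_expSum_sub_lt ha
  obtain ⟨η, hη, hhigh⟩ := exists_exp_mul_expSum_add_lt ht
  set r₁ := exp (η' * a) * expSum ℓ (μ - η') / P
  set r₂ := exp (-η * t) * expSum ℓ (μ + η) / P
  set q := exp (c - (-μ * a + log P))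
  have hr₁ : r₁ < 1 := (div_lt_one hP).2 hlow
  have hr₂ : r₂ < 1 := (div_lt_one hP).2 hhigh
  have hr₁0 : 0 ≤ r₁ := div_nonneg (mul_pos (exp_pos _) (expSum_pos _)).le hP.le
  have hr₂0 : 0 ≤ r₂ := div_nonneg (mul_pos (exp_pos _) (expSum_pos _)).le hP.le
  have hq : q < 1 := exp_lt_one_iff.2 (by linarith)
  have hPq : P * q = exp (μ * a) * exp c := by
    calc P * q = exp (log P) * q := by rw [exp_log hP]
      _ = _ := by rw [← exp_add, ← exp_add]; congr 1; ring
  have hsmall : ∀ᶠ J : ℕ in atTop, q ^ J < 1 - r₁ ^ J - r₂ ^ J := by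
    refine (tendsto_pow_atTop_nhds_zero_of_lt_one (exp_pos _).le hq).eventually_lt ?_ zero_lt_one
    simpa [sub_sub] using ((tendsto_pow_atTop_nhds_zero_of_lt_one hr₁0 hr₁).add
      (tendsto_pow_atTop_nhds_zero_of_lt_one hr₂0 hr₂)).const_sub 1
  filter_upwards [hsmall, eventually_gt_atTop 0] with J hJq hJ
  have hcount := wordCount_ge (ℓ := ℓ) hμ hJ (J * a) t hη.le hη'.le
  rw [show μ * (J * a) = J * (μ * a) by ring, show η' * (J * a) = J * (η' * a) by ring,
    show -η * (J * t) = J * (-η * t) by ring, exp_nat_mul, exp_nat_mul, exp_nat_mul,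
    ← mul_pow, ← mul_pow, (mul_div_cancel₀ _ hP.ne' : P * r₁ = _).symm,
    (mul_div_cancel₀ _ hP.ne' : P * r₂ = _).symm, mul_pow, mul_pow] at hcount
  have : (P * q) ^ J < P ^ J * (1 - r₁ ^ J - r₂ ^ J) := by
    rw [mul_pow]
    exact mul_lt_mul_of_pos_left hJq (pow_pos hP J)
  rw [hPq, mul_pow] at this
  exact lt_of_mul_lt_mul_left (this.trans_le (by linarith)) (pow_pos (exp_pos _) J).le

lemma eventually_lt_log_wordCount [Nonempty α] {μ a t c : ℝ} (hμ : μ ≤ 0)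
    (ha : a < tiltedMean ℓ μ) (ht : tiltedMean ℓ μ < t) (hc : c < -μ * a + log (expSum ℓ μ)) :
    ∀ᶠ J : ℕ in atTop, c < 1 / (J : ℝ) * log (wordCount ℓ J t) := by
  filter_upwards [eventually_exp_pow_lt_wordCount hμ ha ht hc, eventually_gt_atTop 0]
    with J hcount hJ
  have := log_lt_log (pow_pos (exp_pos c) J) hcount
  rw [log_pow, log_exp] at this
  rw [one_div, lt_inv_mul_iff₀ (Nat.cast_pos.2 hJ)]
  linarith

lemma limsup_log_wordCount_le {μ t : ℝ} (hμ : μ ≤ 0) (ht : ∃ a, ℓ a ≤ t) :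
    limsup (fun J : ℕ => 1 / (J : ℝ) * log (wordCount ℓ J t)) atTop
      ≤ -μ * t + log (expSum ℓ μ) :=
  limsup_le_of_le (isCoboundedUnder_le_of_le atTop fun J =>
      mul_nonneg (by positivity) (log_natCast_nonneg _))
    ((eventually_gt_atTop 0).mono fun _ hJ => log_wordCount_le hμ hJ ht)

/-- The lower bound tilts at some `ν < μ`, where `tiltedMean ℓ ν < tiltedMean ℓ μ ≤ t`
strictly, and lets `ν → μ`. -/
theorem tendsto_log_wordCount (hℓ : ∃ a b, ℓ a ≠ ℓ b) {μ t : ℝ} (hμ : μ ≤ 0)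
    (ht : tiltedMean ℓ μ ≤ t) (hμt : μ = 0 ∨ tiltedMean ℓ μ = t) :
    Tendsto (fun J : ℕ => 1 / (J : ℝ) * log (wordCount ℓ J t)) atTop
      (𝓝 (-μ * tiltedMean ℓ μ + log (expSum ℓ μ))) := by
  have : Nonempty α := ⟨hℓ.choose⟩
  refine tendsto_order.2 ⟨fun c hc => ?_, fun b hb => ?_⟩
  · have hcont : Continuous fun ν => -ν * tiltedMean ℓ ν + log (expSum ℓ ν) :=
      (continuous_neg.mul continuous_tiltedMean).add
        (continuous_expSum.log fun ν => (expSum_pos ν).ne')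
    obtain ⟨ν, hνμ, hν⟩ := hcont.continuousAt.exists_lt_lt hc
    obtain ⟨a, ha, hca⟩ := (continuous_id.const_mul (-ν)).add_const (log (expSum ℓ ν))
      |>.continuousAt.exists_lt_lt hν
    exact eventually_lt_log_wordCount (hνμ.le.trans hμ) ha
      ((strictMono_tiltedMean hℓ hνμ).trans_le ht) hca
  · filter_upwards [eventually_gt_atTop 0] with J hJ
    have hle := log_wordCount_le hμ hJ ((exists_le_tiltedMean μ).imp fun _ h => h.trans ht)
    have : -μ * t = -μ * tiltedMean ℓ μ := by rcases hμt with rfl | h <;> simp [*]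
    linarith

end Cramer

namespace BMData

open Real Finset Cramer

variable (C : BMData)

instance : Nonempty {a // a ∈ C.A} := C.A_nonempty.to_subtype

lemma colCount_pos_iff {c : Fin C.m} : 0 < C.colCount c ↔ c ∈ C.cols := by
  simp only [colCount, cols, card_pos, Finset.Nonempty, mem_filter, Finset.mem_image]

lemma sum_colCount : ∑ c ∈ C.cols, C.colCount c = C.N :=
  (card_eq_sum_card_fiberwise fun _ hp => mem_image_of_mem _ hp).symm

def colLog (φ : {a // a ∈ C.A} → Fin C.m) (a : {a // a ∈ C.A}) : ℝ := log (C.colCount (φ a))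

variable {C} {φ : {a // a ∈ C.A} → Fin C.m}
  (hφ : ∀ j : Fin C.m, Nat.card {a : {a // a ∈ C.A} // φ a = j} = C.colCount j)
include hφ

lemma apply_mem_cols (a : {a // a ∈ C.A}) : φ a ∈ C.cols := by
  rw [← colCount_pos_iff, ← hφ]
  exact Nat.card_pos_iff.2 ⟨⟨⟨a, rfl⟩⟩, inferInstance⟩

lemma sum_colLog (g : ℝ → ℝ) :
    ∑ a, g (C.colLog φ a) = ∑ c ∈ C.cols, (C.colCount c : ℝ) * g (log (C.colCount c)) := by
  refine (sum_fiberwise_of_maps_to' (s := univ) (fun a _ => apply_mem_cols hφ a)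
    (fun c => g (log (C.colCount c)))).symm.trans (sum_congr rfl fun c _ => ?_)
  rw [sum_const, nsmul_eq_mul, ← hφ c, Nat.card_eq_fintype_card, Fintype.card_subtype]

lemma expSum_colLog_sub_one (x : ℝ) :
    expSum (C.colLog φ) (x - 1) = ∑ c ∈ C.cols, (C.colCount c : ℝ) ^ x := by
  refine (sum_colLog hφ fun s => exp ((x - 1) * s)).trans ?_
  refine sum_congr rfl fun c hc => ?_
  have hpos : (0 : ℝ) < C.colCount c := Nat.cast_pos.2 ((colCount_pos_iff C).2 hc)
  rw [rpow_def_of_pos hpos]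
  nth_rewrite 1 [← exp_log hpos]
  rw [← exp_add]
  ring_nf

lemma expSum_colLog_neg_one : expSum (C.colLog φ) (-1) = C.M := by
  rw [show (-1 : ℝ) = 0 - 1 by norm_num, expSum_colLog_sub_one hφ]
  simp [M]

lemma tiltedMean_colLog_neg_one : tiltedMean (C.colLog φ) (-1) = C.tLow := by
  rw [tiltedMean, expSum_colLog_neg_one hφ, tLow, one_div, inv_mul_eq_div,
    sum_colLog hφ fun s => s * exp (-1 * s)]
  congr 1
  refine sum_congr rfl fun c hc => ?_
  have hpos : (0 : ℝ) < C.colCount c := Nat.cast_pos.2 ((colCount_pos_iff C).2 hc)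
  rw [neg_one_mul, exp_neg, exp_log hpos]
  field_simp

lemma tiltedMean_colLog_zero : tiltedMean (C.colLog φ) 0 = C.tUp := by
  rw [tiltedMean, show (0 : ℝ) = 1 - 1 by norm_num, expSum_colLog_sub_one hφ, sub_self,
    sum_colLog hφ fun s => s * exp (0 * s), tUp, sum_div]
  simp only [zero_mul, exp_zero, mul_one, rpow_one]
  rw [← Nat.cast_sum, sum_colCount]
  exact sum_congr rfl fun c _ => by ring

lemma exists_apply_eq {c : Fin C.m} (hc : c ∈ C.cols) : ∃ a, φ a = c := by
  have : 0 < Nat.card {a // φ a = c} := hφ c ▸ (colCount_pos_iff C).2 hc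
  obtain ⟨⟨a, ha⟩⟩ := (Nat.card_pos_iff.1 this).1
  exact ⟨a, ha⟩

lemma exists_colLog_ne (hnu : C.NonUniform) : ∃ a b, C.colLog φ a ≠ C.colLog φ b := by
  obtain ⟨i, hi, j, hj, hij⟩ := hnu
  obtain ⟨a, rfl⟩ := exists_apply_eq hφ hi
  obtain ⟨b, rfl⟩ := exists_apply_eq hφ hj
  refine ⟨a, b, fun h => hij (Nat.cast_injective (R := ℝ) ?_)⟩
  exact log_injOn_pos (Set.mem_Ioi.2 (Nat.cast_pos.2 ((colCount_pos_iff C).2 hi)))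
    (Set.mem_Ioi.2 (Nat.cast_pos.2 ((colCount_pos_iff C).2 hj))) h

lemma exists_colLog_le {t : ℝ}
    (ht : ⨅ j : {c // c ∈ C.cols}, log (C.colCount j.1) < t) : ∃ a, C.colLog φ a ≤ t := by
  have : Nonempty {c // c ∈ C.cols} := (C.A_nonempty.image _).to_subtype
  obtain ⟨⟨c, hc⟩, hct⟩ := exists_lt_of_ciInf_lt ht
  obtain ⟨a, rfl⟩ := exists_apply_eq hφ hc
  exact ⟨a, hct.le⟩

/-- The rate function at a tilted mean is attained at `λ = μ + 1`, by the tangent-line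
inequality for the convex function `log ∘ expSum`. -/
lemma rate_tiltedMean_colLog (μ : ℝ) :
    C.rate (tiltedMean (C.colLog φ) μ) = (μ + 1) * tiltedMean (C.colLog φ) μ
      - log (expSum (C.colLog φ) μ) + log C.M := by
  have hM : (0 : ℝ) < C.M := Nat.cast_pos.2 (zero_lt_one.trans C.one_lt_cols)
  have hterm : ∀ l : ℝ, l * tiltedMean (C.colLog φ) μ
      - log (1 / (C.M : ℝ) * ∑ j ∈ C.cols, (C.colCount j : ℝ) ^ l)
      = l * tiltedMean (C.colLog φ) μ - log (expSum (C.colLog φ) (l - 1)) + log C.M := by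
    intro l
    rw [← expSum_colLog_sub_one hφ, log_mul (by positivity) (expSum_pos _).ne', one_div,
      log_inv]
    ring
  have hle : ∀ l : ℝ, l * tiltedMean (C.colLog φ) μ - log (expSum (C.colLog φ) (l - 1))
      + log C.M ≤ (μ + 1) * tiltedMean (C.colLog φ) μ - log (expSum (C.colLog φ) μ) + log C.M :=
    fun l => by linarith [log_expSum_add_le (ℓ := C.colLog φ) μ (l - 1)]
  rw [rate]
  simp only [hterm]
  refine le_antisymm (ciSup_le hle) (le_ciSup_of_le ⟨_, Set.forall_mem_range.2 hle⟩ (μ + 1) ?_)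
  rw [add_sub_cancel_right]

lemma exists_tiltedMean_colLog_eq_min {t : ℝ} (ht : C.tLow ≤ t) :
    ∃ μ ≤ 0, tiltedMean (C.colLog φ) μ = min t C.tUp ∧
      (μ = 0 ∨ tiltedMean (C.colLog φ) μ = t) := by
  by_cases htUp : t ≤ C.tUp
  · obtain ⟨μ, ⟨-, hμ⟩, hμt⟩ := intermediate_value_Icc (show (-1 : ℝ) ≤ 0 by norm_num)
      continuous_tiltedMean.continuousOn
      (show t ∈ Set.Icc _ _ by
        rw [tiltedMean_colLog_neg_one hφ, tiltedMean_colLog_zero hφ]; exact ⟨ht, htUp⟩)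
    exact ⟨μ, hμ, by rw [hμt, min_eq_left htUp], Or.inr hμt⟩
  · exact ⟨0, le_rfl, by rw [tiltedMean_colLog_zero hφ, min_eq_right (le_of_not_ge htUp)],
      Or.inl rfl⟩

end BMData

/-- **Lemma (counting words with small column average).** Let `φ` assign to each map its
column (any map with fibres of cardinality `N_ĵ`), and for a word `ī` of length `J` over
the maps let `A(ī) = (1/J) ∑ log N_{φ(i_j)}`. Then (a) for `t ∈ [t̲, max_ĵ log N_ĵ)` the
exponential growth rate of `#{ī : A(ī) ≤ t}` is `min{t,t̄} + log M − I(min{t,t̄})`; and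
(b) for `t ∈ (min_ĵ log N_ĵ, t̲)` the upper growth rate is at most `t + log M < t̲ + log M`. -/
theorem statement14 (C : BMData) (hnu : C.NonUniform)
    (φ : {a // a ∈ C.A} → Fin C.m)
    (hφ : ∀ j : Fin C.m, Nat.card {a : {a // a ∈ C.A} // φ a = j} = C.colCount j) :
    (∀ t : ℝ, C.tLow ≤ t →
      t < (⨆ j : {c // c ∈ C.cols}, Real.log (C.colCount j.1)) →
      Filter.Tendsto (fun J : ℕ => (1 / (J : ℝ)) * Real.log
          (Nat.card {w : Fin J → {a // a ∈ C.A} //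
            (1 / (J : ℝ)) * ∑ j : Fin J, Real.log (C.colCount (φ (w j))) ≤ t}))
        Filter.atTop
        (nhds (min t C.tUp + Real.log C.M - C.rate (min t C.tUp)))) ∧
    (∀ t : ℝ, (⨅ j : {c // c ∈ C.cols}, Real.log (C.colCount j.1)) < t → t < C.tLow →
      Filter.limsup (fun J : ℕ => (1 / (J : ℝ)) * Real.log
          (Nat.card {w : Fin J → {a // a ∈ C.A} //
            (1 / (J : ℝ)) * ∑ j : Fin J, Real.log (C.colCount (φ (w j))) ≤ t}))
        Filter.atTop ≤ t + Real.log C.M ∧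
      t + Real.log C.M < C.tLow + Real.log C.M) := by
  refine ⟨fun t ht _ => ?_, fun t hinf ht => ⟨?_, by linarith⟩⟩
  · obtain ⟨μ, hμ, hmin, hμt⟩ := C.exists_tiltedMean_colLog_eq_min hφ ht
    have hlimit : min t C.tUp + Real.log C.M - C.rate (min t C.tUp) =
        -μ * Cramer.tiltedMean (C.colLog φ) μ + Real.log (Cramer.expSum (C.colLog φ) μ) := by
      rw [← hmin, C.rate_tiltedMean_colLog hφ]
      ring
    rw [hlimit]
    exact Cramer.tendsto_log_wordCount (C.exists_colLog_ne hφ hnu) hμ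
      (hmin ▸ min_le_left t C.tUp) hμt
  · have := Cramer.limsup_log_wordCount_le (μ := -1) (by norm_num) (C.exists_colLog_le hφ hinf)
    rwa [C.expSum_colLog_neg_one hφ, neg_neg, one_mul] at this
end
end
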